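/- For λ in the open unit disc 𝔻 and P_z(λ) = (1-|z|²)/|1-λ̄z|² the Poisson kernel viewed as a function of z ∈ 𝔻, the Laplacian in z satisfies Δ_z P_z(λ) = 4(|λ|²-1)/|1-λ̄z|⁴. -/

import Mathlib

open Complex Metric

/-- The standard Laplacian `Δu = u_xx + u_yy` of a function `u : ℂ → ℝ`,
expressed via second directional derivatives in the directions `1` and `I`. -/
noncomputable def lap (u : ℂ → ℝ) (z : ℂ) : ℝ :=
  fderiv ℝ (fun w => fderiv ℝ u w 1) z 1 +
    fderiv ℝ (fun w => fderiv ℝ u w Complex.I) z Complex.I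

open ComplexConjugate

noncomputable def mcD (a b F G : ℂ) : ℂ →L[ℝ] ℂ :=
  (conj b * F) • ContinuousLinearMap.id ℝ ℂ +
    a • ((Complex.conjCLE : ℂ →L[ℝ] ℂ).comp (G • ContinuousLinearMap.id ℝ ℂ))

@[simp] lemma mcD_apply (a b F G v : ℂ) :
    mcD a b F G v = F * v * conj b + a * conj (G * v) := by
  simp [mcD, Complex.conjCLE_apply, map_mul]
  ring

lemma hasFDerivAt_mc {f g : ℂ → ℂ} {F G w : ℂ}
    (hf : HasDerivAt f F w) (hg : HasDerivAt g G w) :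
    HasFDerivAt (fun x => f x * conj (g x)) (mcD (f w) (g w) F G) w := by
  have h2 : HasFDerivAt (fun x => conj (g x))
      ((Complex.conjCLE : ℂ →L[ℝ] ℂ).comp (((1 : ℂ →L[ℂ] ℂ).smulRight G).restrictScalars ℝ)) w :=
    (Complex.conjCLE : ℂ →L[ℝ] ℂ).hasFDerivAt.comp w (hg.hasFDerivAt.restrictScalars ℝ)
  have h3 := (hf.hasFDerivAt.restrictScalars ℝ).mul h2
  refine h3.congr_fderiv ?_
  ext v
  simp [Complex.conjCLE_apply, map_mul]
  ring

lemma lap_re_mul_conj {s : Set ℂ} (hs : IsOpen s) {z : ℂ} (hz : z ∈ s)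
    {u : ℂ → ℝ} {f g f' g' : ℂ → ℂ} {F2 G2 : ℂ}
    (hu : ∀ w ∈ s, u w = (f w * conj (g w)).re)
    (hf : ∀ w ∈ s, HasDerivAt f (f' w) w)
    (hg : ∀ w ∈ s, HasDerivAt g (g' w) w)
    (hf' : HasDerivAt f' F2 z)
    (hg' : HasDerivAt g' G2 z) :
    lap u z = 4 * (f' z * conj (g' z)).re := by
  have hfd : ∀ w ∈ s, fderiv ℝ u w
      = Complex.reCLM.comp (mcD (f w) (g w) (f' w) (g' w)) := by
    intro w hw
    have hev : u =ᶠ[nhds w] fun x => (f x * conj (g x)).re :=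
      Filter.eventuallyEq_of_mem (hs.mem_nhds hw) hu
    rw [hev.fderiv_eq]
    exact (Complex.reCLM.hasFDerivAt.comp w (hasFDerivAt_mc (hf w hw) (hg w hw))).fderiv
  have key : ∀ v : ℂ, fderiv ℝ (fun w => fderiv ℝ u w v) z v
      = (F2 * v * v * conj (g z) + 2 * ((f' z * v) * conj (g' z * v))
          + f z * conj (G2 * v * v)).re := by
    intro v
    have hev : (fun w => fderiv ℝ u w v)
        =ᶠ[nhds z] fun w => ((f' w * v) * conj (g w) + f w * conj (g' w * v)).re := by
      refine Filter.eventuallyEq_of_mem (hs.mem_nhds hz) fun w hw => ?_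
      rw [hfd w hw]; simp
    rw [hev.fderiv_eq]
    have hD : HasFDerivAt
        (fun w => ((f' w * v) * conj (g w) + f w * conj (g' w * v)).re)
        (Complex.reCLM.comp (mcD (f' z * v) (g z) (F2 * v) (g' z)
          + mcD (f z) (g' z * v) (f' z) (G2 * v))) z := by
      exact Complex.reCLM.hasFDerivAt.comp z
        ((hasFDerivAt_mc (hf'.mul_const v) (hg z hz)).add
          (hasFDerivAt_mc (hf z hz) ((hg'.mul_const v))))
    rw [hD.fderiv]
    have hv : (mcD (f' z * v) (g z) (F2 * v) (g' z)
        + mcD (f z) (g' z * v) (f' z) (G2 * v)) v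
        = F2 * v * v * conj (g z) + 2 * ((f' z * v) * conj (g' z * v))
          + f z * conj (G2 * v * v) := by
      simp [map_mul]; ring
    simp [hv]
    ring
  have h1 := key 1
  have hI := key Complex.I
  unfold lap
  rw [h1, hI]
  have hc : (F2 * 1 * 1 * conj (g z) + 2 * ((f' z * 1) * conj (g' z * 1))
          + f z * conj (G2 * 1 * 1))
      + (F2 * Complex.I * Complex.I * conj (g z)
          + 2 * ((f' z * Complex.I) * conj (g' z * Complex.I))
          + f z * conj (G2 * Complex.I * Complex.I))
      = 4 * (f' z * conj (g' z)) := by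
    simp [map_mul, Complex.conj_I]
    ring_nf
    simp [Complex.I_sq]
    ring
  calc _ = ((F2 * 1 * 1 * conj (g z) + 2 * ((f' z * 1) * conj (g' z * 1))
          + f z * conj (G2 * 1 * 1))
      + (F2 * Complex.I * Complex.I * conj (g z)
          + 2 * ((f' z * Complex.I) * conj (g' z * Complex.I))
          + f z * conj (G2 * Complex.I * Complex.I))).re := by simp [Complex.add_re]
    _ = _ := by rw [hc]; simp

theorem laplacian_poisson_kernel (l : ℂ) (hl : l ∈ ball (0:ℂ) 1)
    (z : ℂ) (hz : z ∈ ball (0:ℂ) 1) :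
    lap (fun w => (1 - ‖w‖ ^ 2) / ‖1 - (starRingEnd ℂ) l * w‖ ^ 2) z =
      4 * (‖l‖ ^ 2 - 1) / ‖1 - (starRingEnd ℂ) l * z‖ ^ 4 := by
  set c : ℂ := conj l with hc
  have hq : ∀ w ∈ ball (0:ℂ) 1, (1 : ℂ) - c * w ≠ 0 := by
    intro w hw
    have h1 : ‖c * w‖ < 1 := by
      rw [norm_mul]
      simp only [mem_ball, dist_zero_right] at hl hw
      calc ‖c‖ * ‖w‖ ≤ ‖c‖ * 1 :=
            mul_le_mul_of_nonneg_left hw.le (norm_nonneg _)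
        _ = ‖l‖ := by simp [hc]
        _ < 1 := hl
    intro h
    rw [sub_eq_zero] at h
    rw [← h] at h1
    simp at h1
  set f : ℂ → ℂ := fun w => (1 + w) / (1 - c * w) with hf_def
  set g : ℂ → ℂ := fun w => (1 - w) / (1 - c * w) with hg_def
  set f' : ℂ → ℂ := fun w => (1 + c) / (1 - c * w) ^ 2 with hf'_def
  set g' : ℂ → ℂ := fun w => (c - 1) / (1 - c * w) ^ 2 with hg'_def
  have hf : ∀ w ∈ ball (0:ℂ) 1, HasDerivAt f (f' w) w := by
    intro w hw
    have h0 := hq w hw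
    have h := ((hasDerivAt_id w).const_add 1).div
      (((hasDerivAt_id w).const_mul c).const_sub 1) h0
    refine h.congr_deriv ?_
    simp only [id, Pi.pow_apply, hf'_def]
    field_simp [hf'_def]
    ring
  have hg : ∀ w ∈ ball (0:ℂ) 1, HasDerivAt g (g' w) w := by
    intro w hw
    have h0 := hq w hw
    have h := ((hasDerivAt_id w).const_sub 1).div
      (((hasDerivAt_id w).const_mul c).const_sub 1) h0
    refine h.congr_deriv ?_
    simp only [id, Pi.pow_apply, hg'_def]
    field_simp [hg'_def]
    ring
  have hf' : HasDerivAt f' (2 * c * (1 + c) / (1 - c * z) ^ 3) z := by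
    have h0 := hq z hz
    have h := (hasDerivAt_const z (1 + c)).div
      ((((hasDerivAt_id z).const_mul c).const_sub 1).pow 2) (pow_ne_zero 2 h0)
    refine h.congr_deriv ?_
    simp only [id, Pi.pow_apply]
    field_simp
    ring
  have hg' : HasDerivAt g' (2 * c * (c - 1) / (1 - c * z) ^ 3) z := by
    have h0 := hq z hz
    have h := (hasDerivAt_const z (c - 1)).div
      ((((hasDerivAt_id z).const_mul c).const_sub 1).pow 2) (pow_ne_zero 2 h0)
    refine h.congr_deriv ?_
    simp only [id, Pi.pow_apply]
    field_simp
    ring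
  have hu : ∀ w ∈ ball (0:ℂ) 1,
      (1 - ‖w‖ ^ 2) / ‖1 - (starRingEnd ℂ) l * w‖ ^ 2
        = (f w * conj (g w)).re := by
    intro w hw
    have hqw := hq w hw
    have habs : ((‖w‖ ^ 2 : ℝ) : ℂ) = w * conj w := by
      rw [Complex.sq_norm]
      exact_mod_cast (Complex.mul_conj w).symm
    have hden : ((‖1 - c * w‖ ^ 2 : ℝ) : ℂ)
        = (1 - c * w) * conj (1 - c * w) := by
      rw [Complex.sq_norm]
      exact_mod_cast (Complex.mul_conj (1 - c * w)).symm
    have hden' : ((‖1 - c * w‖ ^ 2 : ℝ) : ℂ) ≠ 0 := by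
      rw [hden]
      exact mul_ne_zero hqw (by rw [← map_zero (starRingEnd ℂ)]; exact fun h => hqw (RingHom.injective _ h))
    have h1 : f w * conj (g w)
        = (((1 - ‖w‖ ^ 2 : ℝ)) : ℂ) / ((‖1 - c * w‖ ^ 2 : ℝ) : ℂ)
          + (w - conj w) / ((‖1 - c * w‖ ^ 2 : ℝ) : ℂ) := by
      simp only [hf_def, hg_def, map_div₀]
      rw [div_mul_div_comm, ← hden, ← add_div]
      congr 1
      push_cast [habs]
      simp only [map_sub, map_one]
      ring
    rw [h1]
    rw [Complex.add_re, Complex.div_ofReal_re, Complex.div_ofReal_re]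
    simp [Complex.sub_re, Complex.conj_re, ← Complex.ofReal_pow]
    rfl
  have key := lap_re_mul_conj isOpen_ball hz hu hf hg hf' hg'
  rw [key]
  have hll : ((‖l‖ ^ 2 : ℝ) : ℂ) = c * l := by
    rw [Complex.sq_norm, hc, mul_comm]
    exact_mod_cast (Complex.mul_conj l).symm
  have hden : ((‖1 - c * z‖ ^ 4 : ℝ) : ℂ)
      = (1 - c * z) ^ 2 * conj ((1 - c * z) ^ 2) := by
    rw [map_pow, ← mul_pow]
    rw [Complex.mul_conj]
    rw [← Complex.sq_norm]
    push_cast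
    ring
  have h2 : f' z * conj (g' z)
      = (((‖l‖ ^ 2 - 1 : ℝ)) : ℂ) / ((‖1 - c * z‖ ^ 4 : ℝ) : ℂ)
        + (l - c) / ((‖1 - c * z‖ ^ 4 : ℝ) : ℂ) := by
    simp only [hf'_def, hg'_def, map_div₀]
    rw [div_mul_div_comm, ← hden, ← add_div]
    congr 1
    have : conj (c - 1) = l - 1 := by rw [map_sub, map_one, hc, Complex.conj_conj]
    rw [this]
    push_cast [hll]
    ring
  rw [h2]
  rw [Complex.add_re, Complex.div_ofReal_re, Complex.div_ofReal_re]
  have : (l - c).re = 0 := by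
    rw [Complex.sub_re, hc, Complex.conj_re]
    ring
  rw [this]
  simp [mul_div_assoc, ← Complex.ofReal_pow]
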